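/- Let p be a positive natural number, E := EuclideanSpace ℝ (Fin p), and let (Ω, 𝒜, μ) be a probability space with a filtration (ℱ_k)_{k∈ℕ}. Let L, σ, c, b > 0, let f_c : E → ℝ be differentiable with L-Lipschitz gradient and bounded below by f*_c ∈ ℝ, let f : E → ℝ be differentiable, and assume ‖∇f(θ)‖² ≤ 2·‖∇f_c(θ)‖² + (c²/2)·L·(p+3)³ for all θ ∈ E. Let γ ∈ (1/2, 1], 0 < α ≤ 1/(4·L), and set α_k := α/(k+1)^γ. Suppose random sequences θ_k, r_k, b_k : Ω → E satisfy: θ_0 deterministic; θ_{k+1} = θ_k − α_k • (∇f_c(θ_k) + r_k + b_k); θ_k and b_k are ℱ_k-measurable; r_k is ℱ_{k+1}-measurable, integrable with square-integrable norm; E[r_k | ℱ_k] = 0 a.s.; E[‖r_k‖² | ℱ_k] ≤ σ² a.s.; ‖b_k‖ ≤ 2·b/c a.s.; and each θ_k has square-integrable norm with f_c(θ_k) integrable. Then for every K ≥ 1, writing S_K := Σ_{k=0}^{K−1} α_k and Q_K := Σ_{k=0}^{K−1} α_k², the stepsize-weighted average of the expected squared gradient norms satisfies (1/S_K)·Σ_{k=0}^{K−1}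 α_k·E[‖∇f(θ_k)‖²] ≤ 8·(f_c(θ_0) − f*_c)/S_K + 4·L·(σ² + 8·b²/c²)·Q_K/S_K + 16·b²/c² + (c²/2)·L·(p+3)³. -/

import Mathlib

/-!
With `g_k = ∇f_c(θ_k)` and `β = 2b/c`, the descent lemma for the `L`-smooth `f_c` gives
`f_c(θ_{k+1}) ≤ f_c(θ_k) - α_k ⟪g_k, g_k + r_k + b_k⟫ + L α_k² / 2 ‖g_k + r_k + b_k‖²`.
Young's inequality absorbs the bias into `α_k ‖g_k‖² / 4`, and `L α_k ≤ 1/4` absorbs the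
quadratic term into another `α_k ‖g_k‖² / 4`. Every term linear in the noise `r_k` is an inner
product with an `ℱ_k`-measurable square-integrable vector, hence has expectation zero, so
`E f_c(θ_{k+1}) ≤ E f_c(θ_k) - α_k/2 E‖g_k‖² + (α_k + L α_k²) β² + L α_k² σ² / 2`.
Telescoping against `f_c ≥ f*_c` and using `‖∇f‖² ≤ 2‖∇f_c‖² + (c²/2) L (p+3)³` gives the bound.
-/

open MeasureTheory
open scoped RealInnerProductSpace

section Descent

variable {E : Type*} [NormedAddCommGroup E] [InnerProductSpace ℝ E] [CompleteSpace E]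
  {f : E → ℝ} {L : ℝ}

theorem hasDerivAt_comp_add_smul {x v : E} {t : ℝ} (hf : DifferentiableAt ℝ f (x + t • v)) :
    HasDerivAt (fun s : ℝ => f (x + s • v)) ⟪gradient f (x + t • v), v⟫ t := by
  have hline : HasDerivAt (fun s : ℝ => x + s • v) v t := by
    simpa using ((hasDerivAt_id t).smul_const v).const_add x
  have h := (hasGradientAt_iff_hasFDerivAt.mp hf.hasGradientAt).comp_hasDerivAt t hline
  rwa [InnerProductSpace.toDual_apply_apply] at h

theorem le_add_inner_gradient_add_sq (hf : Differentiable ℝ f)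
    (hLip : ∀ x y, ‖gradient f x - gradient f y‖ ≤ L * ‖x - y‖) (x v : E) :
    f (x + v) ≤ f x + ⟪gradient f x, v⟫ + L / 2 * ‖v‖ ^ 2 := by
  set ψ : ℝ → ℝ := fun t => f (x + t • v) - t * ⟪gradient f x, v⟫ - L / 2 * ‖v‖ ^ 2 * t ^ 2
  have hψ : ∀ t, HasDerivAt ψ
      (⟪gradient f (x + t • v) - gradient f x, v⟫ - L * ‖v‖ ^ 2 * t) t := fun t => by
    refine (((hasDerivAt_comp_add_smul (hf _)).sub (hasDerivAt_mul_const _)).sub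
      ((hasDerivAt_pow 2 t).const_mul (L / 2 * ‖v‖ ^ 2))).congr_deriv ?_
    rw [inner_sub_left]; ring
  have hanti : AntitoneOn ψ (Set.Ici 0) := by
    refine antitoneOn_of_hasDerivWithinAt_nonpos (convex_Ici 0)
      (fun t _ => (hψ t).continuousAt.continuousWithinAt) (fun t _ => (hψ t).hasDerivWithinAt)
      fun t ht => ?_
    rw [interior_Ici, Set.mem_Ioi] at ht
    have hcs := real_inner_le_norm (gradient f (x + t • v) - gradient f x) v
    have hlip : ‖gradient f (x + t • v) - gradient f x‖ ≤ L * (t * ‖v‖) := by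
      simpa [norm_smul, abs_of_pos ht] using hLip (x + t • v) x
    nlinarith [mul_le_mul_of_nonneg_right hlip (norm_nonneg v)]
  have h01 := hanti (Set.mem_Ici.2 le_rfl) (Set.mem_Ici.2 zero_le_one) zero_le_one
  simp only [ψ, zero_smul, add_zero, one_smul, zero_mul, one_mul] at h01
  linarith

-- The noise `r` enters only through the last term, which has mean zero when `r` is a
-- martingale difference and `x`, `b` are known beforehand.
theorem le_of_biased_gradient_step (hf : Differentiable ℝ f)
    (hLip : ∀ x y, ‖gradient f x - gradient f y‖ ≤ L * ‖x - y‖) (hL : 0 ≤ L) {a β : ℝ}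
    (ha : 0 ≤ a) (haL : L * a ≤ 1 / 4) (x r b : E) (hb : ‖b‖ ≤ β) :
    f (x - a • (gradient f x + r + b))
      ≤ f x - a / 2 * ‖gradient f x‖ ^ 2 + (a + L * a ^ 2) * β ^ 2 + L * a ^ 2 / 2 * ‖r‖ ^ 2
        + ⟪(L * a ^ 2) • (gradient f x + b) - a • gradient f x, r⟫ := by
  set g := gradient f x
  have hdesc := le_add_inner_gradient_add_sq hf hLip x (-(a • (g + r + b)))
  have hinner : ⟪g, -(a • (g + r + b))⟫ = -(a * (‖g‖ ^ 2 + ⟪g, r⟫ + ⟪g, b⟫)) := by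
    rw [inner_neg_right, real_inner_smul_right, inner_add_right, inner_add_right,
      real_inner_self_eq_norm_sq]
  have hnorm : ‖-(a • (g + r + b))‖ ^ 2 = a ^ 2 * (‖g + b‖ ^ 2 + 2 * ⟪g + b, r⟫ + ‖r‖ ^ 2) := by
    rw [norm_neg, norm_smul, mul_pow, Real.norm_eq_abs, sq_abs, add_right_comm,
      norm_add_sq_real]
  have hcross : ⟪(L * a ^ 2) • (g + b) - a • g, r⟫ = L * a ^ 2 * ⟪g + b, r⟫ - a * ⟪g, r⟫ := by
    rw [inner_sub_left, real_inner_smul_left, real_inner_smul_left]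
  rw [← sub_eq_add_neg, hinner, hnorm] at hdesc
  rw [hcross]
  have hb2 : ‖b‖ ^ 2 ≤ β ^ 2 := pow_le_pow_left₀ (norm_nonneg b) hb 2
  have hbias : -⟪g, b⟫ ≤ ‖g‖ ^ 2 / 4 + β ^ 2 := by
    nlinarith [neg_le_abs ⟪g, b⟫, abs_real_inner_le_norm g b, sq_nonneg (‖g‖ / 2 - ‖b‖)]
  have hgb2 : ‖g + b‖ ^ 2 ≤ 2 * ‖g‖ ^ 2 + 2 * β ^ 2 := by
    nlinarith [norm_add_le g b, norm_nonneg (g + b), sq_nonneg (‖g‖ - ‖b‖), norm_nonneg b]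
  have hLa2 : L * a ^ 2 * ‖g‖ ^ 2 ≤ a / 4 * ‖g‖ ^ 2 := by
    linarith [mul_le_mul_of_nonneg_right haL (mul_nonneg ha (sq_nonneg ‖g‖))]
  have hq : 0 ≤ L * a ^ 2 := by positivity
  linarith [mul_le_mul_of_nonneg_left hgb2 hq, mul_le_mul_of_nonneg_left hbias ha]

end Descent

theorem LipschitzWith.of_norm_sub_le' {E F : Type*} [SeminormedAddCommGroup E]
    [SeminormedAddCommGroup F] {K : ℝ} {g : E → F}
    (h : ∀ x y, ‖g x - g y‖ ≤ K * ‖x - y‖) : LipschitzWith K.toNNReal g :=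
  LipschitzWith.of_dist_le' fun x y => by simpa only [dist_eq_norm] using h x y

section Probability

variable {Ω : Type*} {mΩ : MeasurableSpace Ω} {μ : Measure Ω}

theorem LipschitzWith.memLp_comp {E F : Type*} [NormedAddCommGroup E] [NormedAddCommGroup F]
    [IsFiniteMeasure μ] {p : ENNReal} {K : NNReal} {g : E → F} (hg : LipschitzWith K g) {X : Ω → E} (hX : MemLp X p μ) :
    MemLp (fun ω => g (X ω)) p μ := by
  have h0 : LipschitzWith K (fun x => g x - g 0) := by
    simpa using hg.sub (LipschitzWith.const (g 0))
  convert (h0.comp_memLp (by simp) hX).add (memLp_const (g 0)) using 1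
  ext ω
  simp

theorem MeasureTheory.MemLp.integrable_inner {E : Type*} [NormedAddCommGroup E]
    [InnerProductSpace ℝ E] {X Y : Ω → E} (hX : MemLp X 2 μ) (hY : MemLp Y 2 μ) :
    Integrable (fun ω => ⟪X ω, Y ω⟫) μ :=
  (L2.integrable_inner (𝕜 := ℝ) (hX.toLp X) (hY.toLp Y)).congr <| by
    filter_upwards [hX.coeFn_toLp, hY.coeFn_toLp] with ω hXω hYω
    rw [hXω, hYω]

theorem integral_inner_eq_zero_of_condExp_eq_zero {E : Type*} [NormedAddCommGroup E]
    [InnerProductSpace ℝ E] [CompleteSpace E] [IsFiniteMeasure μ] {m : MeasurableSpace Ω}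
    (hm : m ≤ mΩ) {X Y : Ω → E} (hX : MemLp X 2 μ)
    (hXm : AEStronglyMeasurable[m] X μ) (hY : MemLp Y 2 μ) (hY0 : μ[Y|m] =ᵐ[μ] 0) :
    ∫ ω, ⟪X ω, Y ω⟫ ∂μ = 0 := by
  -- `condExpL2` is the orthogonal projection onto the `m`-measurable functions
  have h := inner_condExpL2_eq_inner_fun (𝕜 := ℝ) hm (hY.toLp Y) (hX.toLp X)
    (hXm.congr hX.coeFn_toLp.symm)
  rw [L2.inner_def, L2.inner_def] at h
  calc ∫ ω, ⟪X ω, Y ω⟫ ∂μ = ∫ ω, ⟪(hY.toLp Y) ω, (hX.toLp X) ω⟫ ∂μ := by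
        refine integral_congr_ae ?_
        filter_upwards [hX.coeFn_toLp, hY.coeFn_toLp] with ω hXω hYω
        rw [hXω, hYω, real_inner_comm]
    _ = 0 := by
        rw [← h]
        refine integral_eq_zero_of_ae ?_
        filter_upwards [hY.condExpL2_ae_eq_condExp (𝕜 := ℝ) hm, hY0] with ω h1 h2
        rw [h1, h2, Pi.zero_apply, inner_zero_left, Pi.zero_apply]

theorem integral_le_of_condExp_le [IsProbabilityMeasure μ] {m : MeasurableSpace Ω}
    (hm : m ≤ mΩ) {X : Ω → ℝ} {C : ℝ} (hX : ∀ᵐ ω ∂μ, μ[X|m] ω ≤ C) : ∫ ω, X ω ∂μ ≤ C := by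
  rw [← integral_condExp hm]
  simpa using integral_mono_ae integrable_condExp (integrable_const C) hX

theorem integral_le_mul_integral_add [IsProbabilityMeasure μ] {X Y : Ω → ℝ} {a C : ℝ}
    (hX : 0 ≤ᵐ[μ] X) (hY : Integrable Y μ) (hXY : ∀ᵐ ω ∂μ, X ω ≤ a * Y ω + C) :
    ∫ ω, X ω ∂μ ≤ a * ∫ ω, Y ω ∂μ + C := by
  have h : ∫ ω, X ω ∂μ ≤ ∫ ω, (a * Y ω + C) ∂μ :=
    integral_mono_of_nonneg hX ((hY.const_mul a).add (integrable_const C)) hXY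
  rwa [integral_add (hY.const_mul a) (integrable_const C), integral_const_mul, integral_const,
    probReal_univ, one_smul] at h

end Probability

theorem Finset.sum_range_le_sub_add_of_le_sub_add {I D e : ℕ → ℝ}
    (h : ∀ k, I (k + 1) ≤ I k - D k + e k) (K : ℕ) :
    ∑ k ∈ Finset.range K, D k ≤ I 0 - I K + ∑ k ∈ Finset.range K, e k := by
  induction K with
  | zero => simp
  | succ K ih =>
    rw [Finset.sum_range_succ, Finset.sum_range_succ]
    linarith [h K]

section Steps

variable {Ω E : Type*} {mΩ : MeasurableSpace Ω} {μ : Measure Ω}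
  [NormedAddCommGroup E] [InnerProductSpace ℝ E] [CompleteSpace E] {f : E → ℝ} {L : ℝ}

theorem integral_le_of_biased_gradient_step [IsProbabilityMeasure μ] {m : MeasurableSpace Ω}
    (hm : m ≤ mΩ) (hf : Differentiable ℝ f)
    (hLip : ∀ x y, ‖gradient f x - gradient f y‖ ≤ L * ‖x - y‖) (hL : 0 ≤ L) {a β σ : ℝ}
    (ha : 0 ≤ a) (haL : L * a ≤ 1 / 4) {θ r b : Ω → E} (hθm : StronglyMeasurable[m] θ)
    (hbm : StronglyMeasurable[m] b) (hθ : MemLp θ 2 μ) (hr : MemLp r 2 μ)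
    (hr0 : μ[r|m] =ᵐ[μ] 0) (hrσ : ∫ ω, ‖r ω‖ ^ 2 ∂μ ≤ σ ^ 2) (hbβ : ∀ᵐ ω ∂μ, ‖b ω‖ ≤ β)
    (hfθ : Integrable (fun ω => f (θ ω)) μ)
    (hfθ' : Integrable (fun ω => f (θ ω - a • (gradient f (θ ω) + r ω + b ω))) μ) :
    ∫ ω, f (θ ω - a • (gradient f (θ ω) + r ω + b ω)) ∂μ
      ≤ ∫ ω, f (θ ω) ∂μ - a / 2 * ∫ ω, ‖gradient f (θ ω)‖ ^ 2 ∂μ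
        + (a + L * a ^ 2) * β ^ 2 + L * a ^ 2 / 2 * σ ^ 2 := by
  set g := fun ω => gradient f (θ ω)
  set Y := fun ω => (L * a ^ 2) • (g ω + b ω) - a • g ω
  have hgrad := LipschitzWith.of_norm_sub_le' hLip
  have hgm : StronglyMeasurable[m] g := hgrad.continuous.comp_stronglyMeasurable hθm
  have hg : MemLp g 2 μ := hgrad.memLp_comp hθ
  have hb : MemLp b 2 μ := MemLp.of_bound (hbm.mono hm).aestronglyMeasurable β hbβ
  have hY : MemLp Y 2 μ := ((hg.add hb).const_smul _).sub (hg.const_smul a)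
  have hYm : StronglyMeasurable[m] Y := ((hgm.add hbm).const_smul _).sub (hgm.const_smul a)
  have hY0 : ∫ ω, ⟪Y ω, r ω⟫ ∂μ = 0 :=
    integral_inner_eq_zero_of_condExp_eq_zero hm hY hYm.aestronglyMeasurable hr hr0
  have hgsq : Integrable (fun ω => ‖g ω‖ ^ 2) μ := hg.integrable_norm_pow'
  have hrsq : Integrable (fun ω => ‖r ω‖ ^ 2) μ := hr.integrable_norm_pow'
  have hfg : Integrable (fun ω => f (θ ω) - a / 2 * ‖g ω‖ ^ 2) μ :=
    hfθ.sub (hgsq.const_mul _)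
  have hfgc : Integrable (fun ω => f (θ ω) - a / 2 * ‖g ω‖ ^ 2 + (a + L * a ^ 2) * β ^ 2) μ :=
    hfg.add (integrable_const _)
  have hfgcr : Integrable (fun ω => f (θ ω) - a / 2 * ‖g ω‖ ^ 2 + (a + L * a ^ 2) * β ^ 2
      + L * a ^ 2 / 2 * ‖r ω‖ ^ 2) μ := hfgc.add (hrsq.const_mul _)
  calc ∫ ω, f (θ ω - a • (g ω + r ω + b ω)) ∂μ
      ≤ ∫ ω, (f (θ ω) - a / 2 * ‖g ω‖ ^ 2 + (a + L * a ^ 2) * β ^ 2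
          + L * a ^ 2 / 2 * ‖r ω‖ ^ 2 + ⟪Y ω, r ω⟫) ∂μ := by
        refine integral_mono_ae hfθ' ?_ ?_
        · exact hfgcr.add (hY.integrable_inner hr)
        · filter_upwards [hbβ] with ω hω
          exact le_of_biased_gradient_step hf hLip hL ha haL (θ ω) (r ω) (b ω) hω
    _ = ∫ ω, f (θ ω) ∂μ - a / 2 * ∫ ω, ‖g ω‖ ^ 2 ∂μ + (a + L * a ^ 2) * β ^ 2
          + L * a ^ 2 / 2 * ∫ ω, ‖r ω‖ ^ 2 ∂μ := by
        rw [integral_add hfgcr (hY.integrable_inner hr), integral_add hfgc (hrsq.const_mul _),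
          integral_add hfg (integrable_const _), integral_sub hfθ (hgsq.const_mul _),
          integral_const_mul, integral_const_mul (L * a ^ 2 / 2), integral_const, hY0,
          probReal_univ, one_smul, add_zero]
    _ ≤ _ := by gcongr

theorem sum_integral_norm_gradient_sq_le_of_biased_gradient_steps [IsProbabilityMeasure μ]
    (ℱ : Filtration ℕ mΩ) (hf : Differentiable ℝ f)
    (hLip : ∀ x y, ‖gradient f x - gradient f y‖ ≤ L * ‖x - y‖) (hL : 0 ≤ L) {fstar β σ : ℝ}
    (hflb : ∀ x, fstar ≤ f x) {a : ℕ → ℝ} (ha : ∀ k, 0 ≤ a k) (haL : ∀ k, L * a k ≤ 1 / 4)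
    {θ r b : ℕ → Ω → E}
    (hrec : ∀ k ω, θ (k + 1) ω = θ k ω - a k • (gradient f (θ k ω) + r k ω + b k ω))
    (hθm : ∀ k, StronglyMeasurable[ℱ k] (θ k)) (hbm : ∀ k, StronglyMeasurable[ℱ k] (b k))
    (hθ : ∀ k, MemLp (θ k) 2 μ) (hr : ∀ k, MemLp (r k) 2 μ) (hr0 : ∀ k, μ[r k|ℱ k] =ᵐ[μ] 0)
    (hrσ : ∀ k, ∫ ω, ‖r k ω‖ ^ 2 ∂μ ≤ σ ^ 2) (hbβ : ∀ k, ∀ᵐ ω ∂μ, ‖b k ω‖ ≤ β)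
    (hfθ : ∀ k, Integrable (fun ω => f (θ k ω)) μ) (K : ℕ) :
    ∑ k ∈ Finset.range K, a k / 2 * ∫ ω, ‖gradient f (θ k ω)‖ ^ 2 ∂μ
      ≤ ∫ ω, f (θ 0 ω) ∂μ - fstar + β ^ 2 * ∑ k ∈ Finset.range K, a k
        + L * (β ^ 2 + σ ^ 2 / 2) * ∑ k ∈ Finset.range K, a k ^ 2 := by
  have hstep : ∀ k, ∫ ω, f (θ (k + 1) ω) ∂μ ≤ ∫ ω, f (θ k ω) ∂μ
      - a k / 2 * ∫ ω, ‖gradient f (θ k ω)‖ ^ 2 ∂μ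
      + ((a k + L * a k ^ 2) * β ^ 2 + L * a k ^ 2 / 2 * σ ^ 2) := fun k => by
    have hfθ' := hfθ (k + 1)
    simp_rw [hrec] at hfθ' ⊢
    rw [← add_assoc]
    exact integral_le_of_biased_gradient_step (ℱ.le k) hf hLip hL (ha k) (haL k) (hθm k) (hbm k)
      (hθ k) (hr k) (hr0 k) (hrσ k) (hbβ k) (hfθ k) hfθ'
  have hlb : fstar ≤ ∫ ω, f (θ K ω) ∂μ := by
    simpa using integral_mono (integrable_const fstar) (hfθ K) fun ω => hflb (θ K ω)
  have hsum := Finset.sum_range_le_sub_add_of_le_sub_add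
    (I := fun k => ∫ ω, f (θ k ω) ∂μ) hstep K
  have he : ∑ k ∈ Finset.range K, ((a k + L * a k ^ 2) * β ^ 2 + L * a k ^ 2 / 2 * σ ^ 2)
      = β ^ 2 * ∑ k ∈ Finset.range K, a k
        + L * (β ^ 2 + σ ^ 2 / 2) * ∑ k ∈ Finset.range K, a k ^ 2 := by
    simp only [Finset.mul_sum, ← Finset.sum_add_distrib]
    exact Finset.sum_congr rfl fun k _ => by ring
  linarith

end Steps

theorem biased_two_point_diminishing_stepsize_general
    (p : ℕ)
    {Ω : Type*} {mΩ : MeasurableSpace Ω} {μ : Measure Ω} [IsProbabilityMeasure μ]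
    (ℱ : Filtration ℕ mΩ)
    (L σ c b : ℝ) (hL : 0 < L)
    (fc f : EuclideanSpace ℝ (Fin p) → ℝ) (fcstar : ℝ)
    (hfc : Differentiable ℝ fc)
    (hLip : ∀ x y, ‖gradient fc x - gradient fc y‖ ≤ L * ‖x - y‖)
    (hfclb : ∀ x, fcstar ≤ fc x)
    (hsmooth : ∀ x, ‖gradient f x‖ ^ 2
      ≤ 2 * ‖gradient fc x‖ ^ 2 + (c ^ 2 / 2) * L * ((p : ℝ) + 3) ^ 3)
    (γ : ℝ) (hγ : γ ∈ Set.Ioc (1 / 2 : ℝ) 1)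
    (α : ℝ) (hα : 0 < α) (hαL : α ≤ 1 / (4 * L))
    (αk : ℕ → ℝ) (hαk : ∀ k, αk k = α / ((k : ℝ) + 1) ^ γ)
    (θ r bk : ℕ → Ω → EuclideanSpace ℝ (Fin p))
    (θ0 : EuclideanSpace ℝ (Fin p)) (hθ0 : ∀ ω, θ 0 ω = θ0)
    (hrec : ∀ k ω, θ (k + 1) ω = θ k ω
      - αk k • (gradient fc (θ k ω) + r k ω + bk k ω))
    (hθmeas : ∀ k, StronglyMeasurable[ℱ k] (θ k))
    (hbmeas : ∀ k, StronglyMeasurable[ℱ k] (bk k))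
    (hrint : ∀ k, Integrable (r k) μ)
    (hrsq : ∀ k, Integrable (fun ω => ‖r k ω‖ ^ 2) μ)
    (hrcond : ∀ k, μ[r k|ℱ k] =ᵐ[μ] 0)
    (hrvar : ∀ k, ∀ᵐ ω ∂μ, (μ[fun ω' => ‖r k ω'‖ ^ 2|ℱ k]) ω ≤ σ ^ 2)
    (hbbd : ∀ k, ∀ᵐ ω ∂μ, ‖bk k ω‖ ≤ 2 * b / c)
    (hθsq : ∀ k, Integrable (fun ω => ‖θ k ω‖ ^ 2) μ)
    (hfcint : ∀ k, Integrable (fun ω => fc (θ k ω)) μ)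
    (K : ℕ) (hK : 1 ≤ K) :
    (1 / ∑ k ∈ Finset.range K, αk k) *
        ∑ k ∈ Finset.range K, αk k * ∫ ω, ‖gradient f (θ k ω)‖ ^ 2 ∂μ
      ≤ 8 * (fc θ0 - fcstar) / (∑ k ∈ Finset.range K, αk k)
        + 4 * L * (σ ^ 2 + 8 * b ^ 2 / c ^ 2)
          * (∑ k ∈ Finset.range K, (αk k) ^ 2) / (∑ k ∈ Finset.range K, αk k)
        + 16 * b ^ 2 / c ^ 2 + (c ^ 2 / 2) * L * ((p : ℝ) + 3) ^ 3 := by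
  have hαpos : ∀ k, 0 < αk k := fun k => by rw [hαk]; positivity
  have hαkL : ∀ k, L * αk k ≤ 1 / 4 := fun k => by
    have hle : αk k ≤ α :=
      hαk k ▸ div_le_self hα.le (Real.one_le_rpow (by simp) (by linarith [hγ.1]))
    rw [le_div_iff₀ (by positivity)] at hαL
    nlinarith
  have hθ2 : ∀ k, MemLp (θ k) 2 μ := fun k =>
    (memLp_two_iff_integrable_sq_norm ((hθmeas k).mono (ℱ.le k)).aestronglyMeasurable).2 (hθsq k)
  have hsumG := sum_integral_norm_gradient_sq_le_of_biased_gradient_steps ℱ hfc hLip hL.le hfclb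
    (fun k => (hαpos k).le) hαkL hrec hθmeas hbmeas hθ2
    (fun k => (memLp_two_iff_integrable_sq_norm (hrint k).1).2 (hrsq k)) hrcond
    (fun k => integral_le_of_condExp_le (ℱ.le k) (hrvar k)) hbbd hfcint K
  simp only [hθ0, integral_const, probReal_univ, one_smul] at hsumG
  set S := ∑ k ∈ Finset.range K, αk k
  set Q := ∑ k ∈ Finset.range K, αk k ^ 2
  set C := (c ^ 2 / 2) * L * ((p : ℝ) + 3) ^ 3
  have hsumF : ∑ k ∈ Finset.range K, αk k * ∫ ω, ‖gradient f (θ k ω)‖ ^ 2 ∂μ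
      ≤ 4 * ∑ k ∈ Finset.range K, αk k / 2 * ∫ ω, ‖gradient fc (θ k ω)‖ ^ 2 ∂μ + C * S := calc
    _ ≤ ∑ k ∈ Finset.range K, αk k * (2 * ∫ ω, ‖gradient fc (θ k ω)‖ ^ 2 ∂μ + C) :=
      Finset.sum_le_sum fun k _ => mul_le_mul_of_nonneg_left (integral_le_mul_integral_add
        (ae_of_all _ fun _ => by positivity)
        ((LipschitzWith.of_norm_sub_le' hLip).memLp_comp (hθ2 k)).integrable_norm_pow'
        (ae_of_all _ fun ω => hsmooth (θ k ω))) (hαpos k).le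
    _ = _ := by
      simp only [S, Finset.mul_sum, ← Finset.sum_add_distrib]
      exact Finset.sum_congr rfl fun k _ => by ring
  have hS : 0 < S := Finset.sum_pos (fun k _ => hαpos k) (Finset.nonempty_range_iff.2 (by omega))
  have hLQ : 0 ≤ L * Q := mul_nonneg hL.le (Finset.sum_nonneg fun k _ => sq_nonneg _)
  calc
    _ ≤ (1 / S) * (8 * (fc θ0 - fcstar) + 4 * L * (σ ^ 2 + 8 * b ^ 2 / c ^ 2) * Q
        + (16 * b ^ 2 / c ^ 2 + C) * S) := by
      gcongr
      have hgap : 0 ≤ fc θ0 - fcstar := sub_nonneg.2 (hfclb θ0)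
      have hLQσ := mul_nonneg hLQ (sq_nonneg σ)
      have hLQb : 0 ≤ L * Q * (b ^ 2 / c ^ 2) := mul_nonneg hLQ (by positivity)
      linear_combination hsumF + 4 * hsumG + 4 * hgap + 2 * hLQσ + 16 * hLQb
    _ = _ := by field_simp; ring

/-- diminishing-stepsize convergence guarantee for the two-point function
approximation with biased function evaluations. With `α_k = α/(k+1)^γ`, `γ ∈ (1/2,1]`,
`0 < α ≤ 1/(4L)`, gradient-estimate bias bounded by `2b/c` a.s., and conditionally
mean-zero noise with conditional variance at most `σ²`, the stepsize-weighted average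
of `E‖∇f(θ_k)‖²` is at most
`8(f_c(θ_0) − f*_c)/S_K + 4L(σ² + 8b²/c²)·Q_K/S_K + 16b²/c² + (c²/2)L(p+3)³`. -/
theorem biased_two_point_diminishing_stepsize
    (p : ℕ) (hp : 0 < p)
    {Ω : Type*} {mΩ : MeasurableSpace Ω} {μ : Measure Ω} [IsProbabilityMeasure μ]
    (ℱ : Filtration ℕ mΩ)
    (L σ c b : ℝ) (hL : 0 < L) (hσ : 0 < σ) (hc : 0 < c) (hb : 0 < b)
    (fc f : EuclideanSpace ℝ (Fin p) → ℝ) (fcstar : ℝ)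
    (hfc : Differentiable ℝ fc)
    (hLip : ∀ x y, ‖gradient fc x - gradient fc y‖ ≤ L * ‖x - y‖)
    (hfclb : ∀ x, fcstar ≤ fc x)
    (hf : Differentiable ℝ f)
    (hsmooth : ∀ x, ‖gradient f x‖ ^ 2
      ≤ 2 * ‖gradient fc x‖ ^ 2 + (c ^ 2 / 2) * L * ((p : ℝ) + 3) ^ 3)
    (γ : ℝ) (hγ : γ ∈ Set.Ioc (1 / 2 : ℝ) 1)
    (α : ℝ) (hα : 0 < α) (hαL : α ≤ 1 / (4 * L))
    (αk : ℕ → ℝ) (hαk : ∀ k, αk k = α / ((k : ℝ) + 1) ^ γ)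
    (θ r bk : ℕ → Ω → EuclideanSpace ℝ (Fin p))
    (θ0 : EuclideanSpace ℝ (Fin p)) (hθ0 : ∀ ω, θ 0 ω = θ0)
    (hrec : ∀ k ω, θ (k + 1) ω = θ k ω
      - αk k • (gradient fc (θ k ω) + r k ω + bk k ω))
    (hθmeas : ∀ k, StronglyMeasurable[ℱ k] (θ k))
    (hbmeas : ∀ k, StronglyMeasurable[ℱ k] (bk k))
    (hrmeas : ∀ k, StronglyMeasurable[ℱ (k + 1)] (r k))
    (hrint : ∀ k, Integrable (r k) μ)
    (hrsq : ∀ k, Integrable (fun ω => ‖r k ω‖ ^ 2) μ)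
    (hrcond : ∀ k, μ[r k|ℱ k] =ᵐ[μ] 0)
    (hrvar : ∀ k, ∀ᵐ ω ∂μ, (μ[fun ω' => ‖r k ω'‖ ^ 2|ℱ k]) ω ≤ σ ^ 2)
    (hbbd : ∀ k, ∀ᵐ ω ∂μ, ‖bk k ω‖ ≤ 2 * b / c)
    (hθsq : ∀ k, Integrable (fun ω => ‖θ k ω‖ ^ 2) μ)
    (hfcint : ∀ k, Integrable (fun ω => fc (θ k ω)) μ)
    (K : ℕ) (hK : 1 ≤ K) :
    (1 / ∑ k ∈ Finset.range K, αk k) *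
        ∑ k ∈ Finset.range K, αk k * ∫ ω, ‖gradient f (θ k ω)‖ ^ 2 ∂μ
      ≤ 8 * (fc θ0 - fcstar) / (∑ k ∈ Finset.range K, αk k)
        + 4 * L * (σ ^ 2 + 8 * b ^ 2 / c ^ 2)
          * (∑ k ∈ Finset.range K, (αk k) ^ 2) / (∑ k ∈ Finset.range K, αk k)
        + 16 * b ^ 2 / c ^ 2 + (c ^ 2 / 2) * L * ((p : ℝ) + 3) ^ 3 :=
  biased_two_point_diminishing_stepsize_general p ℱ L σ c b hL fc f fcstar hfc hLip hfclb hsmooth γ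
    hγ α hα hαL αk hαk θ r bk θ0 hθ0 hrec hθmeas hbmeas hrint hrsq hrcond hrvar hbbd hθsq hfcint K
    hK
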